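/- Let G be a finite simple graph. Then for every vertex v, ℓ(μ_v(G)) = ℓ(G). -/

import Mathlib

open Classical Finset

noncomputable section

/-- The mutation `μ_v(G)` of a graph `G` at a vertex `v`: edges not incident to `v`
are those of `G`; edges incident to `v` are the pairs `vw` with `w ≠ v`, `w ∉ N_G(v)`. -/
def mutation {V : Type*} (G : SimpleGraph V) (v : V) : SimpleGraph V where
  Adj x y := x ≠ y ∧
    ((x = v ∧ ¬ G.Adj v y) ∨ (y = v ∧ ¬ G.Adj v x) ∨ (x ≠ v ∧ y ≠ v ∧ G.Adj x y))
  symm := by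
    constructor
    rintro x y ⟨hxy, h | h | ⟨h1, h2, h3⟩⟩
    · exact ⟨hxy.symm, Or.inr (Or.inl h)⟩
    · exact ⟨hxy.symm, Or.inl h⟩
    · exact ⟨hxy.symm, Or.inr (Or.inr ⟨h2, h1, h3.symm⟩)⟩
  loopless := by
    constructor
    rintro x ⟨hxx, -⟩
    exact hxx rfl

/-- The relative mutation `μ_{v←u}(G)` of `G` at `v` with respect to `u`: edges not
incident to `v` are those of `G`; edges incident to `v` are the pairs `vw` with
`w ≠ v` and `w` in the symmetric difference `N_G(u) Δ N_G(v)`. -/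
def relMutation {V : Type*} (G : SimpleGraph V) (v u : V) : SimpleGraph V where
  Adj x y := x ≠ y ∧
    ((x = v ∧ (G.Adj u y ↔ ¬ G.Adj v y)) ∨ (y = v ∧ (G.Adj u x ↔ ¬ G.Adj v x)) ∨
      (x ≠ v ∧ y ≠ v ∧ G.Adj x y))
  symm := by
    constructor
    rintro x y ⟨hxy, h | h | ⟨h1, h2, h3⟩⟩
    · exact ⟨hxy.symm, Or.inr (Or.inl h)⟩
    · exact ⟨hxy.symm, Or.inl h⟩
    · exact ⟨hxy.symm, Or.inr (Or.inr ⟨h2, h1, h3.symm⟩)⟩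
  loopless := by
    constructor
    rintro x ⟨hxx, -⟩
    exact hxx rfl

/-- A vertex is isolated if it has no neighbors. -/
def isIsolated {V : Type*} (G : SimpleGraph V) (v : V) : Prop := ∀ w, ¬ G.Adj v w

/-- `pairGraph a b` is the graph `G(a,b)` on `2a+b` vertices consisting of `a`
pairwise disjoint edges `{0,1}, {2,3}, …` together with `b` isolated vertices. -/
def pairGraph (a b : ℕ) : SimpleGraph (Fin (2 * a + b)) where
  Adj x y := x ≠ y ∧ (x : ℕ) / 2 = (y : ℕ) / 2 ∧ (x : ℕ) < 2 * a
  symm := by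
    constructor
    rintro x y ⟨h1, h2, h3⟩
    exact ⟨h1.symm, h2.symm, by omega⟩
  loopless := by
    constructor
    rintro x ⟨hxx, -⟩
    exact hxx rfl

/-- The adjacency matrix `M(G)` of `G`, over `F_2`. -/
def adjMat {n : ℕ} (G : SimpleGraph (Fin n)) : Matrix (Fin n) (Fin n) (ZMod 2) :=
  fun i j => if G.Adj i j then 1 else 0

/-- The matrix `X(G)` over `F_2`: upper-left `n×n` block is `M(G)`, and the last row
and column consist entirely of `1`'s except for the `(n+1, n+1)` entry, which is `0`. -/
def Xmat {n : ℕ} (G : SimpleGraph (Fin n)) :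
    Matrix (Fin (n + 1)) (Fin (n + 1)) (ZMod 2) :=
  fun i j =>
    if hi : (i : ℕ) < n then
      if hj : (j : ℕ) < n then adjMat G ⟨i, hi⟩ ⟨j, hj⟩ else 1
    else if (j : ℕ) < n then 1 else 0

/-- Finite simple graphs on vertex sets `{1, …, n}`, bundled with `n`. -/
abbrev GraphOn := Σ n : ℕ, SimpleGraph (Fin n)

/-- One move: either pass to an isomorphic graph, or apply a mutation `μ_v`, or apply a
relative mutation `μ_{v←w}` to a graph containing an isolated vertex `u ∉ {v, w}`. -/
inductive MoveStep : GraphOn → GraphOn → Prop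
  | iso {n m : ℕ} (G : SimpleGraph (Fin n)) (H : SimpleGraph (Fin m)) :
      Nonempty (G ≃g H) → MoveStep ⟨n, G⟩ ⟨m, H⟩
  | mut {n : ℕ} (G : SimpleGraph (Fin n)) (v : Fin n) :
      MoveStep ⟨n, G⟩ ⟨n, mutation G v⟩
  | relMut {n : ℕ} (G : SimpleGraph (Fin n)) (v w u : Fin n) :
      v ≠ w → u ≠ v → u ≠ w → isIsolated G u →
      MoveStep ⟨n, G⟩ ⟨n, relMutation G v w⟩

/-- `G ≈ G'`: `G'` is obtained from `G`, up to graph isomorphism, by a finite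
sequence of mutations and relative mutations (the latter in the presence of an
isolated vertex distinct from the two vertices involved). -/
def graphEquiv (A B : GraphOn) : Prop := Relation.ReflTransGen MoveStep A B

/-- The induced subgraph of `G` on `{i, j, k}` has an even number of edges. -/
def evenTriple {V : Type*} (G : SimpleGraph V) (i j k : V) : Prop :=
  Even ((if G.Adj i j then 1 else 0) + (if G.Adj i k then 1 else 0) +
    (if G.Adj j k then 1 else 0) : ℕ)

/-- `ℓ(G)`: the number of 2-element subsets `{i, j}` (encoded as pairs `i < j`) such
that for every vertex `k ∉ {i, j}` the induced subgraph of `G` on `{i, j, k}` has an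
even number of edges. -/
def ell {n : ℕ} (G : SimpleGraph (Fin n)) : ℕ :=
  ((univ : Finset (Fin n × Fin n)).filter
    (fun p => p.1 < p.2 ∧ ∀ k, k ≠ p.1 → k ≠ p.2 → evenTriple G p.1 p.2 k)).card

/-- `J(G)`: the set of 2-element subsets `{i, j}` (encoded as pairs `i < j`) with
`N_G(i) = N_G(j) ≠ ∅`. -/
def Jfinset {n : ℕ} (G : SimpleGraph (Fin n)) : Finset (Fin n × Fin n) :=
  (univ : Finset (Fin n × Fin n)).filter
    (fun p => p.1 < p.2 ∧ G.neighborSet p.1 = G.neighborSet p.2 ∧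
      G.neighborSet p.1 ≠ ∅)

/-- `j(G) = #J(G)`. -/
def jnum {n : ℕ} (G : SimpleGraph (Fin n)) : ℕ := (Jfinset G).card

/-- `i(G)`: the number of isolated vertices of `G`. -/
def numIso {n : ℕ} (G : SimpleGraph (Fin n)) : ℕ :=
  ((univ : Finset (Fin n)).filter (fun v => isIsolated G v)).card

end

/-! Mutation at `v` complements the adjacency of every pair through `v` and keeps all other
pairs. A triangle of distinct vertices through `v` has exactly two of its three pairs through
`v`, so the parity of its edge count, and with it the condition defining `ℓ`, is unchanged. -/

section Mutation

variable {V : Type*} (G : SimpleGraph V) {v x y : V}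

lemma mutation_adj_of_ne (hx : x ≠ v) (hy : y ≠ v) : (mutation G v).Adj x y ↔ G.Adj x y := by
  by_cases hxy : x = y
  · subst hxy
    simp only [SimpleGraph.irrefl]
  · simp [mutation, hxy, hx, hy]

lemma mutation_adj_self_left (hy : y ≠ v) : (mutation G v).Adj v y ↔ ¬ G.Adj v y := by
  simp [mutation, hy.symm, hy]

lemma mutation_adj_self_right (hx : x ≠ v) : (mutation G v).Adj x v ↔ ¬ G.Adj x v := by
  rw [SimpleGraph.adj_comm, mutation_adj_self_left G hx, G.adj_comm]

end Mutation

lemma evenTriple_iff {V : Type*} (G : SimpleGraph V) (i j k : V) :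
    evenTriple G i j k ↔ (G.Adj i j ↔ (G.Adj i k ↔ ¬ G.Adj j k)) := by
  unfold evenTriple
  split_ifs <;> simp_all [Nat.odd_iff]

theorem evenTriple_mutation_iff {V : Type*} (G : SimpleGraph V) (v : V) {i j k : V}
    (hij : i ≠ j) (hik : i ≠ k) (hjk : j ≠ k) :
    evenTriple (mutation G v) i j k ↔ evenTriple G i j k := by
  simp only [evenTriple_iff]
  obtain rfl | hi := eq_or_ne i v
  · rw [mutation_adj_self_left G hij.symm, mutation_adj_self_left G hik.symm,
      mutation_adj_of_ne G hij.symm hik.symm]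
    tauto
  obtain rfl | hj := eq_or_ne j v
  · rw [mutation_adj_self_right G hi, mutation_adj_of_ne G hi hjk.symm,
      mutation_adj_self_left G hjk.symm]
    tauto
  obtain rfl | hk := eq_or_ne k v
  · rw [mutation_adj_of_ne G hi hj, mutation_adj_self_right G hi, mutation_adj_self_right G hj]
    tauto
  · rw [mutation_adj_of_ne G hi hj, mutation_adj_of_ne G hi hk, mutation_adj_of_ne G hj hk]

/-- `ℓ(μ_v(G)) = ℓ(G)` for every vertex `v`. -/
theorem stmt_14 {n : ℕ} (G : SimpleGraph (Fin n)) (v : Fin n) :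
    ell (mutation G v) = ell G := by
  unfold ell
  congr 1
  refine Finset.filter_congr fun p _ => and_congr_right fun hlt => ?_
  exact forall_congr' fun k => imp_congr_right fun hk₁ => imp_congr_right fun hk₂ =>
    evenTriple_mutation_iff G v hlt.ne (Ne.symm hk₁) (Ne.symm hk₂)
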